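/- Let I ⊆ (0,∞) be a nonempty open interval, let f, g : I → ℝ be twice differentiable with nowhere vanishing first derivatives, let n ≥ 2, let λ_1,…,λ_n, μ_1,…,μ_n > 0 and α_1,…,α_n, β_1,…,β_n ∈ ℝ, and define p_i(x) := λ_i x^{α_i} and q_i(x) := μ_i x^{β_i} for i ∈ {1,…,n} and x ∈ I. If A_{f,p} is locally smaller than A_{g,q} and there exist γ > 0 and δ ∈ ℝ such that μ_i = γ λ_i and β_i = α_i + δ for all i, then the function x ↦ x^{2δ} |g'(x)| / |f'(x)| is increasing on I. -/

import Mathlib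

/-!
Fix `x ∈ I` and move only the first coordinate of the diagonal point `(x, …, x)` to `y`.
Both means then become two-point quasi-arithmetic means `f⁻¹(f x + w(y) (f y - f x))` with
weights `w(y) = λ₁ y^α₁ / (λ₁ y^α₁ + S)`, and the difference of the `g`-mean and the `f`-mean has
a local minimum at `y = x`. Its second derivative there,
`2 (w_g' - w_f')(x) + w(1 - w) (g''/g' - f''/f')(x)`, is therefore nonnegative. Because
`μᵢ = γ λᵢ` and `βᵢ = αᵢ + δ`, the two weights agree at `x` and `w_g' - w_f' = w(1 - w) δ / x`,
so `2δ/x + g''/g' - f''/f' ≥ 0` on `I`: this is the logarithmic derivative of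
`x^{2δ} |g'| / |f'|`.
-/

open Set Function Real

/-- The `n`-variable generalized Bajraktarević mean `A_{f,p}` on the interval `I`:
`A_{f,p}(x) = f⁻¹((∑ pᵢ(xᵢ) f(xᵢ)) / (∑ pᵢ(xᵢ)))`. -/
noncomputable def bajMean {n : ℕ} (I : Set ℝ) (f : ℝ → ℝ) (p : Fin n → ℝ → ℝ)
    (x : Fin n → ℝ) : ℝ :=
  Function.invFunOn f I ((∑ i, p i (x i) * f (x i)) / (∑ i, p i (x i)))

/-- The `i`-th first-order partial derivative of `Φ : Iⁿ → ℝ`. -/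
noncomputable def pder {n : ℕ} (Φ : (Fin n → ℝ) → ℝ) (i : Fin n) (y : Fin n → ℝ) : ℝ :=
  deriv (fun t => Φ (Function.update y i t)) (y i)

/-- The second-order partial derivative `∂ᵢ∂ⱼΦ`. -/
noncomputable def pder2 {n : ℕ} (Φ : (Fin n → ℝ) → ℝ) (i j : Fin n) :
    (Fin n → ℝ) → ℝ :=
  pder (pder Φ j) i

/-- `M` is locally smaller than `N`: there is an open set `U ⊆ Iⁿ` containing the
diagonal of `Iⁿ` on which `M ≤ N`. -/
def LocallySmaller {n : ℕ} (I : Set ℝ) (M N : (Fin n → ℝ) → ℝ) : Prop :=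
  ∃ U : Set (Fin n → ℝ), IsOpen U ∧ U ⊆ {x | ∀ i, x i ∈ I} ∧
    (∀ x ∈ I, (fun _ => x) ∈ U) ∧ ∀ x ∈ U, M x ≤ N x

open Filter Topology

theorem Convex.injOn_of_hasDerivAt_ne_zero {I : Set ℝ} {f f' : ℝ → ℝ} (hI : Convex ℝ I)
    (hf : ∀ x ∈ I, HasDerivAt f (f' x) x) (hf'0 : ∀ x ∈ I, f' x ≠ 0) : InjOn f I := by
  have hcont : ContinuousOn f I := fun x hx => (hf x hx).continuousAt.continuousWithinAt
  have hderiv : ∀ x ∈ interior I, HasDerivWithinAt f (f' x) (interior I) x :=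
    fun x hx => (hf x (interior_subset hx)).hasDerivWithinAt
  rcases hasDerivWithinAt_forall_lt_or_forall_gt_of_forall_ne hI
    (fun x hx => (hf x hx).hasDerivWithinAt) hf'0 with hneg | hpos
  · exact (strictAntiOn_of_hasDerivWithinAt_neg hI hcont hderiv
      fun x hx => hneg x (interior_subset hx)).injOn
  · exact (strictMonoOn_of_hasDerivWithinAt_pos hI hcont hderiv
      fun x hx => hpos x (interior_subset hx)).injOn

theorem IsLocalMin.nonneg_of_hasDerivAt_of_hasDerivAt {Φ Φ' : ℝ → ℝ} {a K : ℝ}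
    (hmin : IsLocalMin Φ a) (hΦ : ∀ᶠ t in 𝓝 a, HasDerivAt Φ (Φ' t) t)
    (hK : HasDerivAt Φ' K a) : 0 ≤ K := by
  by_contra! hneg
  have hderiv : deriv Φ =ᶠ[𝓝 a] Φ' := hΦ.mono fun t ht => ht.deriv
  have hmax : IsLocalMax Φ a :=
    isLocalMax_of_deriv_deriv_neg (by rwa [hderiv.deriv_eq, hK.deriv])
      (hmin.deriv_eq_zero) hΦ.self_of_nhds.continuousAt
  have hconst : Φ =ᶠ[𝓝 a] fun _ => Φ a :=
    (hmin.and hmax).mono fun t ht => le_antisymm ht.2 ht.1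
  have hzero : Φ' =ᶠ[𝓝 a] fun _ => 0 :=
    hderiv.symm.trans (hconst.eventuallyEq_nhds.mono fun t ht => by
      rw [ht.deriv_eq, deriv_const])
  exact hneg.ne ((hK.congr_of_eventuallyEq hzero.symm).unique (hasDerivAt_const a 0))

theorem eventually_hasDerivAt_invFunOn {I : Set ℝ} {f f' : ℝ → ℝ} {x : ℝ} (hI : IsOpen I)
    (hinj : InjOn f I) (hf : ∀ y ∈ I, HasDerivAt f (f' y) y) (hf'0 : ∀ y ∈ I, f' y ≠ 0)
    (hx : x ∈ I) (hf'x : ContinuousAt f' x) :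
    ∀ᶠ y in 𝓝 (f x), invFunOn f I y ∈ I ∧
      HasDerivAt (invFunOn f I) (f' (invFunOn f I y))⁻¹ y := by
  have hstrict : HasStrictDerivAt f (f' x) x :=
    hasStrictDerivAt_of_hasDerivAt_of_continuousAt
      (eventually_of_mem (hI.mem_nhds hx) hf) hf'x
  set e := (hstrict.hasStrictFDerivAt_equiv (hf'0 x hx)).toOpenPartialHomeomorph f
  have he : (e : ℝ → ℝ) = f := HasStrictFDerivAt.toOpenPartialHomeomorph_coe _
  have hxe : x ∈ e.source := HasStrictFDerivAt.mem_toOpenPartialHomeomorph_source _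
  set V := e.target ∩ e.symm ⁻¹' I
  have hVopen : IsOpen V := e.continuousOn_symm.isOpen_inter_preimage e.open_target hI
  have hinv_eq : EqOn (invFunOn f I) e.symm V := fun y hy => by
    rw [← hinj.leftInvOn_invFunOn hy.2, ← he, e.right_inv hy.1]
  have hfxV : f x ∈ V := by
    refine ⟨he ▸ e.map_source hxe, ?_⟩
    rw [mem_preimage, ← he, e.left_inv hxe]
    exact hx
  filter_upwards [hVopen.mem_nhds hfxV] with y hy
  rw [hinv_eq hy]
  refine ⟨hy.2, ?_⟩
  refine (e.hasDerivAt_symm hy.1 (hf'0 _ hy.2) (he ▸ hf _ hy.2)).congr_of_eventuallyEq ?_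
  exact eventually_of_mem (hVopen.mem_nhds hy) hinv_eq

theorem exists_hasDerivAt_invFunOn_weighted {I : Set ℝ} {f f' w w' : ℝ → ℝ} {x f''x : ℝ}
    (hI : IsOpen I) (hinj : InjOn f I) (hf : ∀ y ∈ I, HasDerivAt f (f' y) y)
    (hf'0 : ∀ y ∈ I, f' y ≠ 0) (hx : x ∈ I) (hf2 : HasDerivAt f' f''x x)
    (hw : ∀ᶠ y in 𝓝 x, HasDerivAt w (w' y) y) (hw' : DifferentiableAt ℝ w' x) :
    ∃ m' : ℝ → ℝ,
      (∀ᶠ y in 𝓝 x, HasDerivAt (fun y => invFunOn f I (f x + w y * (f y - f x))) (m' y) y) ∧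
      HasDerivAt m' (2 * w' x + w x * (1 - w x) * (f''x / f' x)) x := by
  set F := fun y => f x + w y * (f y - f x)
  set F' := fun y => w' y * (f y - f x) + w y * f' y
  have hF : ∀ᶠ y in 𝓝 x, HasDerivAt F (F' y) y := by
    filter_upwards [hw, hI.mem_nhds hx] with y hwy hy
    exact (hwy.mul ((hf y hy).sub_const (f x))).const_add (f x)
  -- the unknown derivative of `w'` is multiplied by `f x - f x = 0`
  have hF' : HasDerivAt F' (2 * w' x * f' x + w x * f''x) x := by
    refine ((hw'.hasDerivAt.mul ((hf x hx).sub_const (f x))).add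
      (hw.self_of_nhds.mul hf2)).congr_deriv ?_
    rw [sub_self, mul_zero, zero_add]
    ring
  have hFx : F x = f x := by simp [F]
  set m := fun y => invFunOn f I (F y)
  have hmx : m x = x := by simp only [m, hFx, hinj.leftInvOn_invFunOn hx]
  have hinv : ∀ᶠ y in 𝓝 x, m y ∈ I ∧ HasDerivAt (invFunOn f I) (f' (m y))⁻¹ (F y) :=
    hF.self_of_nhds.continuousAt.tendsto.eventually
      (hFx ▸ eventually_hasDerivAt_invFunOn hI hinj hf hf'0 hx hf2.continuousAt)
  set m' := fun y => (f' (m y))⁻¹ * F' y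
  have hm : ∀ᶠ y in 𝓝 x, HasDerivAt m (m' y) y := by
    filter_upwards [hinv, hF] with y hinvy hFy
    exact hinvy.2.comp y hFy
  refine ⟨m', hm, ?_⟩
  have hm'x : m' x = w x := by
    simp only [m', F', hmx, sub_self, mul_zero, zero_add]
    field_simp [hf'0 x hx]
  have hf'm : HasDerivAt (fun y => f' (m y)) (f''x * w x) x := by
    rw [← hm'x]
    exact (hmx ▸ hf2).comp x hm.self_of_nhds
  refine ((hf'm.inv (by rw [hmx]; exact hf'0 x hx)).mul hF').congr_deriv ?_
  simp only [F', Pi.inv_apply, hmx, sub_self, mul_zero, zero_add]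
  field_simp [hf'0 x hx]
  ring

theorem hasDerivAt_rpow_mul_abs_div_abs {u v : ℝ → ℝ} {c y u' v' : ℝ} (hy : 0 < y)
    (hu : HasDerivAt u u' y) (hv : HasDerivAt v v' y) (hu0 : u y ≠ 0) (hv0 : v y ≠ 0) :
    HasDerivAt (fun x => x ^ c * |u x| / |v x|)
      (y ^ c * |u y| / |v y| * (c / y + u' / u y - v' / v y)) y := by
  have hu' := (hasDerivAt_abs hu0).comp y hu
  have hv' := (hasDerivAt_abs hv0).comp y hv
  refine (((hasDerivAt_rpow_const (p := c) (Or.inl hy.ne')).mul hu').div hv'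
    (abs_ne_zero.mpr hv0)).congr_deriv ?_
  simp only [comp_apply, Pi.mul_apply, rpow_sub_one hy.ne']
  rcases hu0.lt_or_gt with hu0 | hu0 <;> rcases hv0.lt_or_gt with hv0 | hv0 <;>
    simp only [_root_.sign_neg, _root_.sign_pos, hu0, hv0, abs_of_neg, abs_of_pos,
      SignType.coe_neg, SignType.coe_one] <;>
    field_simp <;> ring

noncomputable def rpowWeight (c a S y : ℝ) : ℝ := c * y ^ a / (c * y ^ a + S)

theorem hasDerivAt_rpowWeight {c a S y : ℝ} (hc : 0 < c) (hS : 0 ≤ S) (hy : 0 < y) :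
    HasDerivAt (rpowWeight c a S)
      (rpowWeight c a S y * (1 - rpowWeight c a S y) * (a / y)) y := by
  have hP : HasDerivAt (fun y => c * y ^ a) (c * (a * y ^ (a - 1))) y :=
    (hasDerivAt_rpow_const (Or.inl hy.ne')).const_mul c
  have hden : 0 < c * y ^ a + S := by positivity
  refine (hP.div (hP.add_const S) hden.ne').congr_deriv ?_
  rw [rpowWeight, rpow_sub_one hy.ne']
  field_simp

theorem eventually_hasDerivAt_rpowWeight {c a S x : ℝ} (hc : 0 < c) (hS : 0 ≤ S) (hx : 0 < x) :
    ∀ᶠ y in 𝓝 x, HasDerivAt (rpowWeight c a S)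
      (rpowWeight c a S y * (1 - rpowWeight c a S y) * (a / y)) y :=
  eventually_of_mem (Ioi_mem_nhds hx) fun _ hy => hasDerivAt_rpowWeight hc hS hy

theorem differentiableAt_rpowWeight_deriv {c a S x : ℝ} (hc : 0 < c) (hS : 0 ≤ S)
    (hx : 0 < x) :
    DifferentiableAt ℝ (fun y => rpowWeight c a S y * (1 - rpowWeight c a S y) * (a / y)) x :=
  have hd := (hasDerivAt_rpowWeight (a := a) hc hS hx).differentiableAt
  (hd.mul (hd.const_sub 1)).mul ((differentiableAt_const a).div differentiableAt_id hx.ne')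

theorem rpowWeight_mul_one_sub_pos {c a S y : ℝ} (hc : 0 < c) (hS : 0 < S) (hy : 0 < y) :
    0 < rpowWeight c a S y * (1 - rpowWeight c a S y) := by
  have hP : 0 < c * y ^ a := by positivity
  rw [rpowWeight, one_sub_div (by positivity), add_sub_cancel_left]
  positivity

theorem bajMean_update_const {n : ℕ} (I : Set ℝ) (f : ℝ → ℝ) (p : Fin n → ℝ → ℝ) (i : Fin n)
    (x y : ℝ) (h : p i y + ∑ j ∈ Finset.univ.erase i, p j x ≠ 0) :
    bajMean I f p (update (fun _ => x) i y) = invFunOn f I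
      (f x + p i y / (p i y + ∑ j ∈ Finset.univ.erase i, p j x) * (f y - f x)) := by
  have hsum : ∀ φ : ℝ → ℝ → ℝ, ∑ j, φ (update (fun _ => x) i y j) (p j (update (fun _ => x) i y j))
      = φ y (p i y) + ∑ j ∈ Finset.univ.erase i, φ x (p j x) := by
    intro φ
    rw [← Finset.add_sum_erase _ _ (Finset.mem_univ i), update_self]
    congr 1
    exact Finset.sum_congr rfl fun j hj => by rw [update_of_ne (Finset.ne_of_mem_erase hj)]
  unfold bajMean
  rw [hsum (fun z q => q * f z), hsum (fun _ q => q), ← Finset.sum_mul]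
  congr 1
  field_simp
  ring

theorem bajMean_rpow_update_const {n : ℕ} (I : Set ℝ) (h : ℝ → ℝ) {c a : Fin n → ℝ}
    (hc : ∀ i, 0 < c i) (i : Fin n) {x y : ℝ} (hx : 0 < x) (hy : 0 < y) :
    bajMean I h (fun i x => c i * x ^ a i) (update (fun _ => x) i y) =
      invFunOn h I (h x + rpowWeight (c i) (a i) (∑ j ∈ Finset.univ.erase i, c j * x ^ a j) y *
        (h y - h x)) := by
  have hS : 0 ≤ ∑ j ∈ Finset.univ.erase i, c j * x ^ a j :=
    Finset.sum_nonneg fun j _ => by have := hc j; positivity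
  have := hc i
  rw [bajMean_update_const _ _ _ _ _ _ (by positivity), rpowWeight]

theorem LocallySmaller.isLocalMin_update {n : ℕ} {I : Set ℝ} {M N : (Fin n → ℝ) → ℝ}
    (h : LocallySmaller I M N) {x : ℝ} (hx : x ∈ I) (hMN : M (fun _ => x) = N (fun _ => x))
    (i : Fin n) :
    IsLocalMin (fun y => N (update (fun _ => x) i y) - M (update (fun _ => x) i y)) x := by
  obtain ⟨U, hUopen, -, hdiag, hle⟩ := h
  have hcont : Continuous fun y : ℝ => update (fun _ : Fin n => x) i y :=
    continuous_const.update i continuous_id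
  have hU : update (fun _ : Fin n => x) i x ∈ U := by
    rw [update_eq_self_iff.mpr rfl]
    exact hdiag x hx
  filter_upwards [hcont.continuousAt.preimage_mem_nhds (hUopen.mem_nhds hU)] with y hy
  rw [update_eq_self_iff.mpr rfl, hMN, sub_self, sub_nonneg]
  exact hle _ hy

theorem LocallySmaller.second_order_nonneg {n : ℕ} {I : Set ℝ} {M N : (Fin n → ℝ) → ℝ}
    {f f' g g' wf wf' wg wg' : ℝ → ℝ} {x f''x g''x : ℝ} (h : LocallySmaller I M N)
    (hI : IsOpen I) (hx : x ∈ I) (i : Fin n)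
    (hf : ∀ y ∈ I, HasDerivAt f (f' y) y) (hf'0 : ∀ y ∈ I, f' y ≠ 0) (hinjf : InjOn f I)
    (hf2 : HasDerivAt f' f''x x)
    (hg : ∀ y ∈ I, HasDerivAt g (g' y) y) (hg'0 : ∀ y ∈ I, g' y ≠ 0) (hinjg : InjOn g I)
    (hg2 : HasDerivAt g' g''x x)
    (hM : ∀ᶠ y in 𝓝 x, M (update (fun _ => x) i y) = invFunOn f I (f x + wf y * (f y - f x)))
    (hN : ∀ᶠ y in 𝓝 x, N (update (fun _ => x) i y) = invFunOn g I (g x + wg y * (g y - g x)))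
    (hwf : ∀ᶠ y in 𝓝 x, HasDerivAt wf (wf' y) y) (hwf' : DifferentiableAt ℝ wf' x)
    (hwg : ∀ᶠ y in 𝓝 x, HasDerivAt wg (wg' y) y) (hwg' : DifferentiableAt ℝ wg' x)
    (hw : wg x = wf x) :
    0 ≤ 2 * (wg' x - wf' x) + wf x * (1 - wf x) * (g''x / g' x - f''x / f' x) := by
  obtain ⟨mf', hmf, hmf'⟩ := exists_hasDerivAt_invFunOn_weighted hI hinjf hf hf'0 hx hf2 hwf hwf'
  obtain ⟨mg', hmg, hmg'⟩ := exists_hasDerivAt_invFunOn_weighted hI hinjg hg hg'0 hx hg2 hwg hwg'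
  have hupd : update (fun _ : Fin n => x) i x = fun _ => x := update_eq_self_iff.mpr rfl
  have hMx := hM.self_of_nhds
  have hNx := hN.self_of_nhds
  rw [sub_self, mul_zero, add_zero, hinjf.leftInvOn_invFunOn hx, hupd] at hMx
  rw [sub_self, mul_zero, add_zero, hinjg.leftInvOn_invFunOn hx, hupd] at hNx
  have hmin : IsLocalMin (fun y => invFunOn g I (g x + wg y * (g y - g x)) -
      invFunOn f I (f x + wf y * (f y - f x))) x :=
    (h.isLocalMin_update hx (hMx.trans hNx.symm) i).congr
      (hN.mp (hM.mono fun y hMy hNy => by simp only [hMy, hNy]))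
  have hsecond := hmin.nonneg_of_hasDerivAt_of_hasDerivAt
    (hmg.mp (hmf.mono fun y hmfy hmgy => hmgy.sub hmfy)) (hmg'.sub hmf')
  rw [hw] at hsecond
  linear_combination hsecond

theorem two_mul_div_add_div_sub_div_nonneg_of_locallySmaller {n : ℕ} (hn : 2 ≤ n)
    {I : Set ℝ} (hI : IsOpen I) {x : ℝ} (hx : x ∈ I) (hx0 : 0 < x)
    {f f' f'' g g' g'' : ℝ → ℝ}
    (hf : ∀ y ∈ I, HasDerivAt f (f' y) y) (hf'0 : ∀ y ∈ I, f' y ≠ 0) (hinjf : InjOn f I)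
    (hf2 : HasDerivAt f' (f'' x) x)
    (hg : ∀ y ∈ I, HasDerivAt g (g' y) y) (hg'0 : ∀ y ∈ I, g' y ≠ 0) (hinjg : InjOn g I)
    (hg2 : HasDerivAt g' (g'' x) x)
    {lam mu al be : Fin n → ℝ} (hlam : ∀ i, 0 < lam i) (hmu : ∀ i, 0 < mu i)
    (hloc : LocallySmaller I (bajMean I f (fun i x => lam i * x ^ al i))
      (bajMean I g (fun i x => mu i * x ^ be i)))
    {γ δ : ℝ} (hγ : 0 < γ) (hrel : ∀ i : Fin n, mu i = γ * lam i ∧ be i = al i + δ) :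
    0 ≤ 2 * δ / x + g'' x / g' x - f'' x / f' x := by
  set i₀ : Fin n := ⟨0, by omega⟩
  set Sf := ∑ j ∈ Finset.univ.erase i₀, lam j * x ^ al j
  set Sg := ∑ j ∈ Finset.univ.erase i₀, mu j * x ^ be j
  have hSf : 0 < Sf := Finset.sum_pos (fun j _ => by have := hlam j; positivity)
    ⟨⟨1, by omega⟩, Finset.mem_erase.mpr ⟨by simp [i₀, Fin.ext_iff], Finset.mem_univ _⟩⟩
  have hscale : ∀ j, mu j * x ^ be j = γ * x ^ δ * (lam j * x ^ al j) := fun j => by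
    rw [(hrel j).1, (hrel j).2, rpow_add hx0]
    ring
  have hSg : Sg = γ * x ^ δ * Sf := by
    simp only [Sg, Sf, hscale, Finset.mul_sum]
  have hSg0 : 0 < Sg := by rw [hSg]; positivity
  have hw : rpowWeight (mu i₀) (be i₀) Sg x = rpowWeight (lam i₀) (al i₀) Sf x := by
    rw [rpowWeight, rpowWeight, hscale, hSg, ← mul_add, mul_div_mul_left _ _ (by positivity)]
  have hsecond := hloc.second_order_nonneg hI hx i₀ hf hf'0 hinjf hf2 hg hg'0 hinjg hg2
    (eventually_of_mem (Ioi_mem_nhds hx0) fun y hy => bajMean_rpow_update_const I f hlam i₀ hx0 hy)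
    (eventually_of_mem (Ioi_mem_nhds hx0) fun y hy => bajMean_rpow_update_const I g hmu i₀ hx0 hy)
    (eventually_hasDerivAt_rpowWeight (hlam i₀) hSf.le hx0)
    (differentiableAt_rpowWeight_deriv (hlam i₀) hSf.le hx0)
    (eventually_hasDerivAt_rpowWeight (hmu i₀) hSg0.le hx0)
    (differentiableAt_rpowWeight_deriv (hmu i₀) hSg0.le hx0) hw
  rw [hw, (hrel i₀).2] at hsecond
  refine nonneg_of_mul_nonneg_right (hsecond.trans_eq ?_)
    (rpowWeight_mul_one_sub_pos (a := al i₀) (hlam i₀) hSf hx0)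
  ring

theorem stmt9_general {n : ℕ} (hn : 2 ≤ n) (I : Set ℝ) (hIopen : IsOpen I)
    (hIconn : I.OrdConnected) (hIpos : I ⊆ Set.Ioi (0 : ℝ))
    (f f' f'' g g' g'' : ℝ → ℝ)
    (hf : ∀ x ∈ I, HasDerivAt f (f' x) x) (hf2 : ∀ x ∈ I, HasDerivAt f' (f'' x) x)
    (hf'0 : ∀ x ∈ I, f' x ≠ 0)
    (hg : ∀ x ∈ I, HasDerivAt g (g' x) x) (hg2 : ∀ x ∈ I, HasDerivAt g' (g'' x) x)
    (hg'0 : ∀ x ∈ I, g' x ≠ 0)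
    (lam mu : Fin n → ℝ) (al be : Fin n → ℝ)
    (hlam : ∀ i, 0 < lam i) (hmu : ∀ i, 0 < mu i)
    (hloc : LocallySmaller I (bajMean I f (fun i x => lam i * x ^ al i))
      (bajMean I g (fun i x => mu i * x ^ be i)))
    (γ δ : ℝ) (hγ : 0 < γ)
    (hrel : ∀ i : Fin n, mu i = γ * lam i ∧ be i = al i + δ) :
    MonotoneOn (fun x => x ^ (2 * δ) * |g' x| / |f' x|) I := by
  have hconv : Convex ℝ I := hIconn.convex
  have hinjf := hconv.injOn_of_hasDerivAt_ne_zero hf hf'0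
  have hinjg := hconv.injOn_of_hasDerivAt_ne_zero hg hg'0
  have hderiv : ∀ x ∈ I, HasDerivAt (fun x => x ^ (2 * δ) * |g' x| / |f' x|)
      (x ^ (2 * δ) * |g' x| / |f' x| * (2 * δ / x + g'' x / g' x - f'' x / f' x)) x :=
    fun x hx => hasDerivAt_rpow_mul_abs_div_abs (hIpos hx) (hg2 x hx) (hf2 x hx) (hg'0 x hx)
      (hf'0 x hx)
  refine monotoneOn_of_hasDerivWithinAt_nonneg hconv
    (fun x hx => (hderiv x hx).continuousAt.continuousWithinAt)
    (fun x hx => (hderiv x (interior_subset hx)).hasDerivWithinAt) fun x hx => ?_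
  have hx : x ∈ I := interior_subset hx
  have hx0 : 0 < x := hIpos hx
  exact mul_nonneg (by positivity) <|
    two_mul_div_add_div_sub_div_nonneg_of_locallySmaller hn hIopen hx hx0 hf hf'0 hinjf
      (hf2 x hx) hg hg'0 hinjg (hg2 x hx) hlam hmu hloc hγ hrel

/-- Corollary LCp, second-order necessary condition: with power weight functions
`pᵢ(x) = λᵢ x^{αᵢ}`, `qᵢ(x) = μᵢ x^{βᵢ}` on `I ⊆ (0,∞)`, `f, g` twice differentiable
with nonvanishing first derivatives, if `A_{f,p}` is locally smaller than `A_{g,q}` and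
`μᵢ = γλᵢ`, `βᵢ = αᵢ + δ` for all `i` (with `γ > 0`), then `x ↦ x^{2δ}|g'(x)|/|f'(x)|`
is increasing on `I`. -/
theorem stmt9 {n : ℕ} (hn : 2 ≤ n) (I : Set ℝ) (hIopen : IsOpen I)
    (hIconn : I.OrdConnected) (hIne : I.Nonempty) (hIpos : I ⊆ Set.Ioi (0 : ℝ))
    (f f' f'' g g' g'' : ℝ → ℝ)
    (hf : ∀ x ∈ I, HasDerivAt f (f' x) x) (hf2 : ∀ x ∈ I, HasDerivAt f' (f'' x) x)
    (hf'0 : ∀ x ∈ I, f' x ≠ 0)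
    (hg : ∀ x ∈ I, HasDerivAt g (g' x) x) (hg2 : ∀ x ∈ I, HasDerivAt g' (g'' x) x)
    (hg'0 : ∀ x ∈ I, g' x ≠ 0)
    (lam mu : Fin n → ℝ) (al be : Fin n → ℝ)
    (hlam : ∀ i, 0 < lam i) (hmu : ∀ i, 0 < mu i)
    (hloc : LocallySmaller I (bajMean I f (fun i x => lam i * x ^ al i))
      (bajMean I g (fun i x => mu i * x ^ be i)))
    (γ δ : ℝ) (hγ : 0 < γ)
    (hrel : ∀ i : Fin n, mu i = γ * lam i ∧ be i = al i + δ) :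
    MonotoneOn (fun x => x ^ (2 * δ) * |g' x| / |f' x|) I :=
  stmt9_general hn I hIopen hIconn hIpos f f' f'' g g' g'' hf hf2 hf'0 hg hg2 hg'0 lam mu al be hlam
    hmu hloc γ δ hγ hrel
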